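/- Let H be a symmetric real n×n matrix with trace zero, and let v be a unit vector in ℝⁿ. Then |Hv|² ≤ (1 − 1/n) · ‖H‖² , where ‖H‖ denotes the Frobenius norm of H. -/

import Mathlib

open Matrix

set_option maxHeartbeats 1600000 in
/-- Improved Kato inequality in matrix form: if `H` is a symmetric trace-free real `n×n`
matrix (`n ≥ 2`) and `v` is a unit vector, then `|Hv|² ≤ (1 − 1/n)·‖H‖²`, where `‖H‖` is
the Frobenius norm. -/
theorem stmt_1 (n : ℕ) (hn : 2 ≤ n) (H : Matrix (Fin n) (Fin n) ℝ)
    (hsym : H.IsSymm) (htr : H.trace = 0) (v : Fin n → ℝ)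
    (hv : ∑ i, v i ^ 2 = 1) :
    ∑ i, (∑ j, H i j * v j) ^ 2 ≤ (1 - 1 / (n : ℝ)) * ∑ i, ∑ j, H i j ^ 2 := by
  have hn' : (2:ℝ) ≤ (n:ℝ) := by exact_mod_cast hn
  have hnpos : (0:ℝ) < (n:ℝ) := by linarith
  have hsym' : ∀ i j, H j i = H i j := fun i j => by
    have := congrFun (congrFun hsym i) j
    simpa [Matrix.transpose_apply] using this
  have htr' : ∑ i, H i i = 0 := by simpa [Matrix.trace, Matrix.diag] using htr
  set a : Fin n → ℝ := fun i => ∑ j, H i j * v j with ha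
  set c : ℝ := ∑ i, v i * a i with hc
  set b : Fin n → ℝ := fun i => a i - c * v i with hb
  set B : ℝ := ∑ i, b i ^ 2 with hB
  have hBpos : (0:ℝ) ≤ B := by positivity
  have hvb : ∑ i, v i * b i = 0 := by
    have : ∑ i, v i * b i = (∑ i, v i * a i) - c * ∑ i, v i ^ 2 := by
      rw [Finset.mul_sum, ← Finset.sum_sub_distrib]
      refine Finset.sum_congr rfl fun i _ => ?_
      simp [hb]; ring
    rw [this, hv, ← hc]; ring
  have hab : ∑ i, a i * b i = B := by
    have : ∑ i, a i * b i = (∑ i, b i ^ 2) + c * ∑ i, v i * b i := by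
      rw [Finset.mul_sum, ← Finset.sum_add_distrib]
      refine Finset.sum_congr rfl fun i _ => ?_
      have : a i = b i + c * v i := by simp [hb]
      rw [this]; ring
    rw [this, hvb, ← hB]; ring
  have hcol : ∀ j, ∑ i, H i j * v i = a j := by
    intro j
    simp only [ha]
    exact Finset.sum_congr rfl fun i _ => by rw [hsym' j i]
  set e : ℝ := (n:ℝ) - 1 with he
  have hepos : (0:ℝ) < e := by rw [he]; linarith
  set K : Fin n → Fin n → ℝ := fun i j =>
    c / e * ((n:ℝ) * (v i * v j) - (if i = j then (1:ℝ) else 0)) + (v i * b j + b i * v j)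
    with hK
  set S : ℝ := ∑ i, ∑ j, H i j ^ 2 with hS
  -- ⟨H, K⟩ = n c² / e + 2 B
  have hHK : ∑ i, ∑ j, H i j * K i j = (n:ℝ) * c ^ 2 / e + 2 * B := by
    have e1 : ∑ i, ∑ j, v i * (H i j * v j) = c := by
      rw [hc]
      exact Finset.sum_congr rfl fun i _ => by rw [Finset.mul_sum]
    have e2 : ∑ i, ∑ j, H i j * (if i = j then (1:ℝ) else 0) = 0 := by
      have : ∀ i : Fin n, ∑ j, H i j * (if i = j then (1:ℝ) else 0) = H i i := by
        intro i; simp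
      rw [Finset.sum_congr rfl fun i _ => this i]; exact htr'
    have e3 : ∑ i, ∑ j, (H i j * v i) * b j = B := by
      rw [Finset.sum_comm]
      have : ∀ j : Fin n, ∑ i, (H i j * v i) * b j = a j * b j := by
        intro j
        rw [← Finset.sum_mul, hcol]
      rw [Finset.sum_congr rfl fun j _ => this j]; exact hab
    have e4 : ∑ i, ∑ j, b i * (H i j * v j) = B := by
      have : ∀ i : Fin n, ∑ j, b i * (H i j * v j) = a i * b i := by
        intro i; rw [← Finset.mul_sum]; exact mul_comm _ _
      rw [Finset.sum_congr rfl fun i _ => this i]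
      simpa [mul_comm] using hab
    have point : ∀ i j, H i j * K i j =
        (c / e * (n:ℝ)) * (v i * (H i j * v j)) - (c / e) * (H i j * (if i = j then (1:ℝ) else 0))
          + ((H i j * v i) * b j + b i * (H i j * v j)) := by
      intro i j; simp only [hK]; ring
    calc ∑ i, ∑ j, H i j * K i j
        = (c / e * (n:ℝ)) * (∑ i, ∑ j, v i * (H i j * v j))
            - (c / e) * (∑ i, ∑ j, H i j * (if i = j then (1:ℝ) else 0))
            + ((∑ i, ∑ j, (H i j * v i) * b j) + ∑ i, ∑ j, b i * (H i j * v j)) := by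
          simp only [point, Finset.sum_add_distrib, Finset.sum_sub_distrib, ← Finset.mul_sum]
      _ = (n:ℝ) * c ^ 2 / e + 2 * B := by
          rw [e1, e2, e3, e4]; ring
  -- ‖K‖² = n c² / e + 2 B
  have hKK : ∑ i, ∑ j, K i j ^ 2 = (n:ℝ) * c ^ 2 / e + 2 * B := by
    have s1 : ∑ i, ∑ j, v i ^ 2 * v j ^ 2 = 1 := by
      rw [← Finset.sum_mul_sum, hv]; ring
    have s2 : ∑ i, ∑ j, (if i = j then (1:ℝ) else 0) * (v i * v j) = 1 := by
      have : ∀ i : Fin n, ∑ j, (if i = j then (1:ℝ) else 0) * (v i * v j) = v i ^ 2 := by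
        intro i; simp [sq]
      rw [Finset.sum_congr rfl fun i _ => this i]; exact hv
    have s3 : ∑ i : Fin n, ∑ j, (if i = j then (1:ℝ) else 0) = (n:ℝ) := by
      simp
    have s4 : ∑ i, ∑ j, v i ^ 2 * (v j * b j) = 0 := by
      rw [← Finset.sum_mul_sum, hvb]; ring
    have s5 : ∑ i, ∑ j, (v i * b i) * v j ^ 2 = 0 := by
      rw [← Finset.sum_mul_sum, hvb]; ring
    have s6 : ∑ i, ∑ j, (if i = j then (1:ℝ) else 0) * (v i * b j) = 0 := by
      have : ∀ i : Fin n, ∑ j, (if i = j then (1:ℝ) else 0) * (v i * b j) = v i * b i := by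
        intro i; simp
      rw [Finset.sum_congr rfl fun i _ => this i]; exact hvb
    have s7 : ∑ i, ∑ j, (if i = j then (1:ℝ) else 0) * (b i * v j) = 0 := by
      have : ∀ i : Fin n, ∑ j, (if i = j then (1:ℝ) else 0) * (b i * v j) = v i * b i := by
        intro i; simp [mul_comm]
      rw [Finset.sum_congr rfl fun i _ => this i]; exact hvb
    have s8 : ∑ i, ∑ j, v i ^ 2 * b j ^ 2 = B := by
      rw [← Finset.sum_mul_sum, hv, ← hB]; ring
    have s9 : ∑ i, ∑ j, b i ^ 2 * v j ^ 2 = B := by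
      rw [← Finset.sum_mul_sum, hv, ← hB]; ring
    have s10 : ∑ i, ∑ j, (v i * b i) * (v j * b j) = 0 := by
      rw [← Finset.sum_mul_sum, hvb]; ring
    have point : ∀ i j, K i j ^ 2 =
        ((c / e) ^ 2 * (n:ℝ) ^ 2) * (v i ^ 2 * v j ^ 2)
          - ((c / e) ^ 2 * (2 * (n:ℝ))) * ((if i = j then (1:ℝ) else 0) * (v i * v j))
          + ((c / e) ^ 2) * (if i = j then (1:ℝ) else 0)
          + ((2 * (c / e) * (n:ℝ)) * (v i ^ 2 * (v j * b j))
              + (2 * (c / e) * (n:ℝ)) * ((v i * b i) * v j ^ 2))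
          - ((2 * (c / e)) * ((if i = j then (1:ℝ) else 0) * (v i * b j))
              + (2 * (c / e)) * ((if i = j then (1:ℝ) else 0) * (b i * v j)))
          + ((v i ^ 2 * b j ^ 2) + (b i ^ 2 * v j ^ 2) + 2 * ((v i * b i) * (v j * b j))) := by
      intro i j
      have hd : (if i = j then (1:ℝ) else 0) ^ 2 = (if i = j then (1:ℝ) else 0) := by
        split <;> norm_num
      simp only [hK]
      linear_combination (c / e) ^ 2 * hd
    calc ∑ i, ∑ j, K i j ^ 2
        = ((c / e) ^ 2 * (n:ℝ) ^ 2) * (∑ i, ∑ j, v i ^ 2 * v j ^ 2)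
          - ((c / e) ^ 2 * (2 * (n:ℝ))) * (∑ i, ∑ j, (if i = j then (1:ℝ) else 0) * (v i * v j))
          + ((c / e) ^ 2) * (∑ i : Fin n, ∑ j, (if i = j then (1:ℝ) else 0))
          + ((2 * (c / e) * (n:ℝ)) * (∑ i, ∑ j, v i ^ 2 * (v j * b j))
              + (2 * (c / e) * (n:ℝ)) * (∑ i, ∑ j, (v i * b i) * v j ^ 2))
          - ((2 * (c / e)) * (∑ i, ∑ j, (if i = j then (1:ℝ) else 0) * (v i * b j))
              + (2 * (c / e)) * (∑ i, ∑ j, (if i = j then (1:ℝ) else 0) * (b i * v j)))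
          + ((∑ i, ∑ j, v i ^ 2 * b j ^ 2) + (∑ i, ∑ j, b i ^ 2 * v j ^ 2)
              + 2 * (∑ i, ∑ j, (v i * b i) * (v j * b j))) := by
          simp only [point, Finset.sum_add_distrib, Finset.sum_sub_distrib, ← Finset.mul_sum]
      _ = (n:ℝ) * c ^ 2 / e + 2 * B := by
          rw [s1, s2, s3, s4, s5, s6, s7, s8, s9, s10]
          field_simp
          ring
  -- the SOS inequality: S ≥ n c²/e + 2 B
  have key : (n:ℝ) * c ^ 2 / e + 2 * B ≤ S := by
    have hpos : (0:ℝ) ≤ ∑ i, ∑ j, (H i j - K i j) ^ 2 := by positivity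
    have hexp : ∑ i, ∑ j, (H i j - K i j) ^ 2
        = S - 2 * (∑ i, ∑ j, H i j * K i j) + ∑ i, ∑ j, K i j ^ 2 := by
      have point : ∀ i j, (H i j - K i j) ^ 2
          = H i j ^ 2 - 2 * (H i j * K i j) + K i j ^ 2 := fun i j => by ring
      simp only [point, Finset.sum_add_distrib, Finset.sum_sub_distrib, ← Finset.mul_sum, hS]
    rw [hexp, hHK, hKK] at hpos
    linarith
  -- conclude
  have hgoal : ∑ i, a i ^ 2 = B + c ^ 2 := by
    have : ∀ i : Fin n, a i ^ 2 = b i ^ 2 + 2 * c * (v i * b i) + c ^ 2 * v i ^ 2 := by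
      intro i
      have : a i = b i + c * v i := by simp [hb]
      rw [this]; ring
    rw [Finset.sum_congr rfl fun i _ => this i]
    simp only [Finset.sum_add_distrib, ← Finset.mul_sum, hvb, hv, ← hB]
    ring
  have key' : (n:ℝ) * c ^ 2 + 2 * B * e ≤ S * e := by
    have := mul_le_mul_of_nonneg_right key (le_of_lt hepos)
    calc (n:ℝ) * c ^ 2 + 2 * B * e = ((n:ℝ) * c ^ 2 / e + 2 * B) * e := by
          field_simp
      _ ≤ S * e := this
  show ∑ i, a i ^ 2 ≤ (1 - 1 / (n:ℝ)) * S
  rw [hgoal]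
  have h1 : (1 - 1 / (n:ℝ)) * S * (n:ℝ) = S * e := by
    rw [he]; field_simp
  rw [← mul_le_mul_iff_of_pos_right hnpos, h1]
  have h2 : 2 * e ≥ (n:ℝ) := by rw [he]; linarith
  nlinarith [key', hBpos, hnpos]
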